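/- arXiv:1503.03785 — 3 statements merged into one kernel-verified Lean document; each statement's English description precedes it below -/
import Mathlib

section
/- Let A ∈ N be a redundancy-free abstract Swiss cheese with δ₁(A) > 0, set M = μ(A), R = ρ(A), let S̃ be the set of all B ∈ N(M,R) partially above A, and let S₁ = {B ∈ S̃ : δ₁(B) = sup_{C ∈ S̃} δ₁(C)}. If the associated Swiss cheese set X_A has empty interior in ℂ, then every abstract Swiss cheese in S₁ is classical. -/
open Metric Set Filter Topology ENNReal

noncomputable section

/-- Abstract Swiss cheese space `F = (ℂ × [0,∞))^{ℕ₀}` with the product topology. -/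
abbrev ASC := ℕ → ℂ × NNReal

/-- The centre of the `n`-th disk. -/
def ctr (A : ASC) (n : ℕ) : ℂ := (A n).1

/-- The radius of the `n`-th disk, as a real number. -/
def rad (A : ASC) (n : ℕ) : ℝ := ((A n).2 : ℝ)

/-- The associated Swiss cheese set `X_A`. -/
def Xset (A : ASC) : Set ℂ :=
  closedBall (ctr A 0) (rad A 0) \ ⋃ n : ℕ, ball (ctr A (n + 1)) (rad A (n + 1))

/-- The significant index set `S_A = {n ≥ 1 : r_n > 0}`. -/
def SIdx (A : ASC) : Set ℕ := {n | 1 ≤ n ∧ 0 < rad A n}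

/-- The radius sum function `ρ(A) = ∑_{n≥1} r_n`, valued in `[0,∞]`. -/
def rhoSum (A : ASC) : ℝ≥0∞ := ∑' n : ℕ, ((A (n + 1)).2 : ℝ≥0∞)

/-- The centre bound function `μ(A) = sup_{n≥1} |a_n|`, valued in `[0,∞]`. -/
def muSup (A : ASC) : ℝ≥0∞ := ⨆ n : ℕ, (‖(A (n + 1)).1‖₊ : ℝ≥0∞)

/-- `H_A(E) = {n ∈ S_A : B̄(a_n, r_n) ∩ E ≠ ∅}`. -/
def HIdx (A : ASC) (E : Set ℂ) : Set ℕ :=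
  {n | n ∈ SIdx A ∧ (closedBall (ctr A n) (rad A n) ∩ E).Nonempty}

/-- The local radius sum function `ρ_E(A) = ∑_{n ∈ H_A(E)} r_n`. -/
def rhoLoc (A : ASC) (E : Set ℂ) : ℝ≥0∞ :=
  ∑' n : HIdx A E, ((A (n : ℕ)).2 : ℝ≥0∞)

/-- The discrepancy function of order 1, `δ₁(A) = r_0 − ∑_{n≥1} r_n ∈ [−∞,∞)`. -/
def delta1 (A : ASC) : EReal := (rad A 0 : EReal) - ((rhoSum A : ℝ≥0∞) : EReal)

/-- The discrepancy function of order `α`, `δ_α(A) = r_0^α − ∑_{n≥1} r_n^α ∈ [−∞,∞)`. -/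
def deltaAlpha (α : ℝ) (A : ASC) : EReal :=
  ((((A 0).2 : ℝ≥0∞) ^ α : ℝ≥0∞) : EReal) -
    ((∑' n : ℕ, ((A (n + 1)).2 : ℝ≥0∞) ^ α : ℝ≥0∞) : EReal)

/-- The discrepancy function of order 2. -/
def delta2 (A : ASC) : EReal := deltaAlpha 2 A

/-- `A` is classical. -/
def IsClassicalASC (A : ASC) : Prop :=
  rhoSum A < ⊤ ∧ 0 < rad A 0 ∧
  ∀ k ∈ SIdx A,
    closedBall (ctr A k) (rad A k) ⊆ ball (ctr A 0) (rad A 0) ∧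
    ∀ l ∈ SIdx A, l ≠ k →
      closedBall (ctr A k) (rad A k) ∩ closedBall (ctr A l) (rad A l) = ∅

/-- `A` is semiclassical. -/
def IsSemiclassicalASC (A : ASC) : Prop :=
  rhoSum A < ⊤ ∧ 0 < rad A 0 ∧
  ∀ k ∈ SIdx A,
    ball (ctr A k) (rad A k) ⊆ ball (ctr A 0) (rad A 0) ∧
    ∀ l ∈ SIdx A, l ≠ k →
      ball (ctr A k) (rad A k) ∩ ball (ctr A l) (rad A l) = ∅

/-- Membership in `N`: finite radius sum and `(r_n)_{n≥1}` non-increasing. -/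
def memN (A : ASC) : Prop :=
  rhoSum A < ⊤ ∧ ∀ n : ℕ, 1 ≤ n → (A (n + 1)).2 ≤ (A n).2

/-- Membership in `N(M,R)`. -/
def memNMR (M R : ℝ≥0∞) (A : ASC) : Prop := memN A ∧ muSup A ≤ M ∧ rhoSum A ≤ R

/-- `A` is redundancy-free. -/
def RedundancyFree (A : ASC) : Prop :=
  ∀ k ∈ SIdx A,
    (ball (ctr A k) (rad A k) ∩ closedBall (ctr A 0) (rad A 0)).Nonempty ∧
    ∀ l ∈ SIdx A, l ≠ k → ¬ ball (ctr A k) (rad A k) ⊆ ball (ctr A l) (rad A l)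

/-- `B` is partially above `A`. -/
def PartiallyAbove (B A : ASC) : Prop :=
  closedBall (ctr B 0) (rad B 0) ⊆ closedBall (ctr A 0) (rad A 0) ∧
  ∀ n : ℕ, 1 ≤ n →
    ball (ctr A n) (rad A n) ⊆ (closedBall (ctr B 0) (rad B 0))ᶜ ∨
    ∃ m : ℕ, 1 ≤ m ∧ ball (ctr A n) (rad A n) ⊆ ball (ctr B m) (rad B m)

/-- The set `S̃` of all `B ∈ N(μ(A), ρ(A))` partially above `A`. -/
def Stilde (A : ASC) : Set ASC :=
  {B | memNMR (muSup A) (rhoSum A) B ∧ PartiallyAbove B A}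

/-- `S₁`: the elements of `S̃` on which `δ₁` attains its supremum over `S̃`. -/
def S1 (A : ASC) : Set ASC :=
  {B ∈ Stilde A | delta1 B = sSup (delta1 '' Stilde A)}

/-- `S₂`: the elements of `S₁` on which `δ₂` attains its infimum over `S₁`. -/
def S2 (A : ASC) : Set ASC :=
  {B ∈ S1 A | delta2 B = sInf (delta2 '' S1 A)}

/-- The (classical) error set `E(A)`. -/
def errSet (A : ASC) : Set ℂ :=
  (⋃ m ∈ SIdx A, ⋃ n ∈ SIdx A, ⋃ (_ : m ≠ n),
    closedBall (ctr A m) (rad A m) ∩ closedBall (ctr A n) (rad A n)) ∪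
  ⋃ n ∈ SIdx A, (ball (ctr A 0) (rad A 0))ᶜ ∩ closedBall (ctr A n) (rad A n)

/-- `V(C) = ⋃_{n∈I} U_n`. -/
def VC (I : Set ℕ) (U : ℕ → Set ℂ) : Set ℂ := ⋃ n ∈ I, U n

/-- `F(C) = ⋃_{n∈I} K_n`. -/
def FC (I : Set ℕ) (K : ℕ → Set ℂ) : Set ℂ := ⋃ n ∈ I, K n

/-- The set `L_A(C)` for a controlling collection `C = ((K_n, U_n))_{n∈I}`. -/
def LSet (A : ASC) (I : Set ℕ) (K U : ℕ → Set ℂ) : Set ASC :=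
  {B | memNMR (muSup A) (rhoSum A) B ∧
    (∀ n ∈ I, rhoLoc B (U n) ≤ rhoLoc A (U n)) ∧
    closedBall (ctr B 0) (rad B 0) = closedBall (ctr A 0) (rad A 0) ∧
    (∀ k ∈ SIdx A, closedBall (ctr A k) (rad A k) ∩ VC I U = ∅ →
      ∃ l ∈ SIdx B, ball (ctr B l) (rad B l) = ball (ctr A k) (rad A k)) ∧
    (∀ n ∈ I, ∀ k ∈ SIdx A, (closedBall (ctr A k) (rad A k) ∩ U n).Nonempty →
      (∃ l ∈ SIdx B, ball (ctr B l) (rad B l) = ball (ctr A k) (rad A k)) ∨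
      (∃ l ∈ HIdx B (K n), ball (ctr A k) (rad A k) ⊆ ball (ctr B l) (rad B l)))}

/-- `A` is annular: `a_0 = a_1` and `0 < r_1 < r_0`. -/
def Annular (A : ASC) : Prop := ctr A 0 = ctr A 1 ∧ 0 < rad A 1 ∧ rad A 1 < rad A 0

/-- The annular radius sum `ρ_a(A) = ∑_{n≥2} r_n`. -/
def rhoAnn (A : ASC) : ℝ≥0∞ := ∑' n : ℕ, ((A (n + 2)).2 : ℝ≥0∞)

/-- The annular discrepancy `δ_a(A) = r_0 − r_1 − 2ρ_a(A)`. -/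
def deltaAnn (A : ASC) : EReal :=
  ((rad A 0 - rad A 1 : ℝ) : EReal) - ((2 * rhoAnn A : ℝ≥0∞) : EReal)

/-- The family `Ã` of Lemma 6.4 / Theorem 6.6 (annular classicalisation). -/
def ATilde (A : ASC) : Set ASC :=
  {B | (∀ n : ℕ, 2 ≤ n → (B (n + 1)).2 ≤ (B n).2) ∧
    rhoAnn B ≤ rhoAnn A ∧ muSup B ≤ muSup A ∧ PartiallyAbove B A ∧
    ctr B 0 = ctr A 0 ∧ ctr B 1 = ctr A 0 ∧
    rad A 1 ≤ rad B 1 ∧ rad B 1 ≤ rad B 0 ∧ rad B 0 ≤ rad A 0}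

/-!
A maximiser `B` of `δ₁` over `S̃` admits no modification that stays in `S̃` and increases `δ₁`.
Deleting a hole that lies inside another hole or misses the outer disc, merging two overlapping
holes into the smallest disc containing both, and shrinking the outer disc so as to cut off a hole
crossing its boundary are such modifications. Hence the closed holes of `B` lie in the closed outer
disc and are pairwise disjoint, except possibly for tangencies. A tangency is removed by the same
modifications without changing `δ₁`, which yields another maximiser. Since `X_B ⊆ X_A` has empty
interior, some third hole of `B` meets the region next to the point of contact. In that new
maximiser it then either overlaps the merged hole or crosses the new outer circle, which is
impossible.
-/

open scoped NNReal
open AffineMap (lineMap)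

def skipIdx (k n : ℕ) : ℕ := if n < k then n else n + 1

lemma skipIdx_ne (k n : ℕ) : skipIdx k n ≠ k := by
  unfold skipIdx; split <;> omega

lemma skipIdx_injective (k : ℕ) : Function.Injective (skipIdx k) := by
  intro a b h; unfold skipIdx at h; split at h <;> split at h <;> omega

lemma exists_skipIdx_eq {k m : ℕ} (hmk : m ≠ k) : ∃ n, skipIdx k n = m := by
  rcases lt_or_gt_of_ne hmk with h | h
  · exact ⟨m, if_pos h⟩
  · exact ⟨m - 1, by unfold skipIdx; split <;> omega⟩

lemma one_le_skipIdx {k n : ℕ} (hn : 1 ≤ n) : 1 ≤ skipIdx k n := by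
  unfold skipIdx; split <;> omega

lemma one_le_of_one_le_skipIdx {k n : ℕ} (hk : 1 ≤ k) (h : 1 ≤ skipIdx k n) : 1 ≤ n := by
  unfold skipIdx at h; split at h <;> omega

lemma skipIdx_add_one {k : ℕ} (hk : 1 ≤ k) (n : ℕ) :
    skipIdx k (n + 1) = skipIdx (k - 1) n + 1 := by
  unfold skipIdx; split <;> split <;> omega

lemma tsum_comp_skipIdx_add (f : ℕ → ℝ≥0∞) (k : ℕ) :
    ∑' n, f (skipIdx k n) + f k = ∑' n, f n := by
  have hskip : ∑' n, f (skipIdx k n) = ∑' n, if n = k then 0 else f n := by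
    rw [← (skipIdx_injective k).tsum_eq (f := fun n => if n = k then 0 else f n)]
    · exact tsum_congr fun n => by simp [skipIdx_ne k n]
    · intro m hm
      exact exists_skipIdx_eq fun h => hm (by simp [h])
  rw [hskip, add_comm]
  convert (ENNReal.tsum_eq_add_tsum_ite k).symm

def eraseHole (B : ASC) (k : ℕ) : ASC := B ∘ skipIdx k

def insertHole (B : ASC) (p : ℕ) (x : ℂ × ℝ≥0) : ASC :=
  fun n => if n < p then B n else if n = p then x else B (n - 1)

section Sequences

variable {B : ASC} {k p : ℕ} {x : ℂ × ℝ≥0}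

lemma eraseHole_zero (hk : 1 ≤ k) : eraseHole B k 0 = B 0 := by
  simp [eraseHole, skipIdx, show 0 < k by omega]

lemma insertHole_zero (hp : 1 ≤ p) : insertHole B p x 0 = B 0 := by
  simp [insertHole, show 0 < p by omega]

lemma insertHole_self : insertHole B p x p = x := by
  simp [insertHole]

lemma insertHole_skipIdx (n : ℕ) : insertHole B p x (skipIdx p n) = B n := by
  unfold insertHole skipIdx
  split_ifs <;> first | rfl | omega

lemma eraseHole_insertHole : eraseHole (insertHole B p x) p = B :=
  funext insertHole_skipIdx

lemma rhoSum_eraseHole_add (hk : 1 ≤ k) : rhoSum (eraseHole B k) + (B k).2 = rhoSum B := by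
  have := tsum_comp_skipIdx_add (fun n => ((B (n + 1)).2 : ℝ≥0∞)) (k - 1)
  simpa [rhoSum, eraseHole, skipIdx_add_one hk, Nat.sub_add_cancel hk] using this

lemma rhoSum_insertHole (hp : 1 ≤ p) : rhoSum (insertHole B p x) = rhoSum B + x.2 := by
  rw [← rhoSum_eraseHole_add hp, eraseHole_insertHole, insertHole_self]

lemma rhoSum_update_zero : rhoSum (Function.update B 0 x) = rhoSum B := by
  simp [rhoSum]

lemma nnnorm_le_muSup {n : ℕ} (hn : 1 ≤ n) : (‖(B n).1‖₊ : ℝ≥0∞) ≤ muSup B := by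
  obtain ⟨m, rfl⟩ := Nat.exists_eq_add_of_le' hn
  exact le_iSup (fun n => (‖(B (n + 1)).1‖₊ : ℝ≥0∞)) m

lemma muSup_le {M : ℝ≥0∞} (h : ∀ n, 1 ≤ n → (‖(B n).1‖₊ : ℝ≥0∞) ≤ M) : muSup B ≤ M :=
  iSup_le fun n => h (n + 1) (by omega)

lemma muSup_eraseHole_le : muSup (eraseHole B k) ≤ muSup B :=
  muSup_le fun _ hn => nnnorm_le_muSup (one_le_skipIdx hn)

lemma muSup_insertHole_le (hp : 1 ≤ p) : muSup (insertHole B p x) ≤ max (muSup B) ‖x.1‖₊ := by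
  refine muSup_le fun n hn => ?_
  unfold insertHole
  split_ifs
  · exact le_max_of_le_left (nnnorm_le_muSup hn)
  · exact le_max_right _ _
  · exact le_max_of_le_left (nnnorm_le_muSup (by omega))

lemma muSup_update_zero : muSup (Function.update B 0 x) = muSup B := by
  simp [muSup]

lemma memN_update_zero (hB : memN B) : memN (Function.update B 0 x) :=
  ⟨by rw [rhoSum_update_zero]; exact hB.1, fun n hn => by
    simpa [Function.update_of_ne (show n ≠ 0 by omega)] using hB.2 n hn⟩

lemma memN_eraseHole (hB : memN B) (hk : 1 ≤ k) : memN (eraseHole B k) := by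
  refine ⟨lt_of_le_of_lt (le_self_add.trans (rhoSum_eraseHole_add hk).le) hB.1, fun n hn => ?_⟩
  simp only [eraseHole, Function.comp, skipIdx]
  split_ifs <;> first
    | omega
    | exact hB.2 n hn
    | exact (hB.2 (n + 1) (by omega)).trans (hB.2 n hn)
    | exact hB.2 (n + 1) (by omega)

lemma memN_insertHole (hB : memN B) (hp : 1 ≤ p)
    (hbefore : ∀ n, 1 ≤ n → n < p → x.2 ≤ (B n).2) (hafter : (B p).2 ≤ x.2) :
    memN (insertHole B p x) := by
  refine ⟨by rw [rhoSum_insertHole hp]; exact ENNReal.add_lt_top.2 ⟨hB.1, by simp⟩,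
    fun n hn => ?_⟩
  unfold insertHole
  split_ifs <;> first
    | omega
    | exact hB.2 n hn
    | exact hbefore n hn (by omega)
    | exact le_rfl
    | (obtain rfl : n = p := by omega); simpa using hafter
    | (rw [show n + 1 - 1 = n - 1 + 1 by omega]; exact hB.2 (n - 1) (by omega))

lemma exists_memN_insertHole (hB : memN B) (hx : 0 < x.2) :
    ∃ p, 1 ≤ p ∧ memN (insertHole B p x) := by
  have hzero : Filter.Tendsto (fun n => ((B (n + 1)).2 : ℝ≥0∞)) Filter.atTop (𝓝 0) :=
    ENNReal.tendsto_atTop_zero_of_tsum_ne_top hB.1.ne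
  obtain ⟨n, hn⟩ := (hzero.eventually_lt_const (ENNReal.coe_pos.2 hx)).exists
  have hP : ∃ m, 1 ≤ m ∧ (B m).2 ≤ x.2 :=
    ⟨n + 1, by omega, (ENNReal.coe_lt_coe.1 hn).le⟩
  refine ⟨Nat.find hP, (Nat.find_spec hP).1, memN_insertHole hB (Nat.find_spec hP).1
    (fun m hm hlt => ?_) (Nat.find_spec hP).2⟩
  have := Nat.find_min hP hlt
  push Not at this
  exact (this hm).le

end Sequences

def delta1Real (B : ASC) : ℝ := rad B 0 - (rhoSum B).toReal

section Cheeses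

variable {A B C : ASC} {k : ℕ} {x : ℂ × ℝ≥0}

lemma ctr_eq_of_apply_eq {m n : ℕ} (h : C m = B n) : ctr C m = ctr B n :=
  congrArg Prod.fst h

lemma rad_eq_of_apply_eq {m n : ℕ} (h : C m = B n) : rad C m = rad B n :=
  congrArg (fun x => (x.2 : ℝ)) h

lemma delta1_eq_delta1Real (h : rhoSum B ≠ ⊤) : delta1 B = delta1Real B := by
  unfold delta1 delta1Real
  lift rhoSum B to ℝ≥0 using h with ρ
  rfl

lemma rad_le_toReal_rhoSum (h : rhoSum B ≠ ⊤) (hk : 1 ≤ k) : rad B k ≤ (rhoSum B).toReal := by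
  obtain ⟨n, rfl⟩ := Nat.exists_eq_add_of_le' hk
  exact ENNReal.toReal_mono h (ENNReal.le_tsum (f := fun n => ((B (n + 1)).2 : ℝ≥0∞)) n)

lemma rad_lt_rad_zero (h : rhoSum B ≠ ⊤) (hpos : 0 < delta1Real B) (hk : 1 ≤ k) :
    rad B k < rad B 0 := by
  have := rad_le_toReal_rhoSum h hk
  unfold delta1Real at hpos
  linarith

lemma toReal_rhoSum_add_eq {a b : ℝ≥0} (hB : rhoSum B ≠ ⊤) (h : rhoSum C + a = rhoSum B + b) :
    (rhoSum C).toReal + a = (rhoSum B).toReal + b := by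
  have hC : rhoSum C ≠ ⊤ := fun htop => by
    simp only [htop, top_add] at h
    exact ENNReal.add_ne_top.2 ⟨hB, ENNReal.coe_ne_top⟩ h.symm
  simpa [ENNReal.toReal_add, hB, hC] using congrArg ENNReal.toReal h

lemma delta1Real_update_eraseHole (h : rhoSum B ≠ ⊤) (hk : 1 ≤ k) :
    delta1Real (Function.update (eraseHole B k) 0 x) = delta1Real B + rad B k + x.2 - rad B 0 := by
  have := toReal_rhoSum_add_eq (C := Function.update (eraseHole B k) 0 x) (b := 0) h
    (by rw [rhoSum_update_zero, rhoSum_eraseHole_add hk, ENNReal.coe_zero, add_zero])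
  simp only [delta1Real, rad, Function.update_self, NNReal.coe_zero] at this ⊢
  linarith

lemma PartiallyAbove.trans (hCB : PartiallyAbove C B) (hBA : PartiallyAbove B A) :
    PartiallyAbove C A := by
  refine ⟨hCB.1.trans hBA.1, fun n hn => ?_⟩
  rcases hBA.2 n hn with hout | ⟨m, hm, hnm⟩
  · exact Or.inl (hout.trans (compl_subset_compl.2 hCB.1))
  · rcases hCB.2 m hm with hout | ⟨m', hm', hmm'⟩
    · exact Or.inl (hnm.trans hout)
    · exact Or.inr ⟨m', hm', hnm.trans hmm'⟩

lemma Xset_subset_of_partiallyAbove (h : PartiallyAbove B A) : Xset B ⊆ Xset A := by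
  rintro z ⟨hz0, hzB⟩
  refine ⟨h.1 hz0, fun hzA => ?_⟩
  obtain ⟨n, hn⟩ := mem_iUnion.1 hzA
  rcases h.2 (n + 1) (by omega) with hout | ⟨m, hm, hnm⟩
  · exact hout hn hz0
  · obtain ⟨m, rfl⟩ := Nat.exists_eq_add_of_le' hm
    exact hzB (mem_iUnion.2 ⟨m, hnm hn⟩)

lemma partiallyAbove_of_forall_subset (h0 : C 0 = B 0)
    (h : ∀ n, 1 ≤ n → ∃ m, 1 ≤ m ∧ ball (ctr B n) (rad B n) ⊆ ball (ctr C m) (rad C m)) :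
    PartiallyAbove C B :=
  ⟨by simp [ctr, rad, h0], fun n hn => Or.inr (h n hn)⟩

lemma mem_Stilde_of_partiallyAbove (hB : B ∈ Stilde A) (hC : memN C)
    (hμ : muSup C ≤ muSup B) (hρ : rhoSum C ≤ rhoSum B) (hCB : PartiallyAbove C B) :
    C ∈ Stilde A :=
  ⟨⟨hC, hμ.trans hB.1.2.1, hρ.trans hB.1.2.2⟩, hCB.trans hB.2⟩

lemma exists_update_eraseHole_eq (hk : 1 ≤ k) {n : ℕ} (hn : 1 ≤ n) (hnk : n ≠ k) :
    ∃ m, 1 ≤ m ∧ Function.update (eraseHole B k) 0 x m = B n := by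
  obtain ⟨m, rfl⟩ := exists_skipIdx_eq hnk
  have hm := one_le_of_one_le_skipIdx hk hn
  exact ⟨m, hm, by simp [eraseHole, Function.update_of_ne (show m ≠ 0 by omega)]⟩

lemma update_eraseHole_mem_Stilde (hB : B ∈ Stilde A) (hk : 1 ≤ k)
    (hx : closedBall x.1 x.2 ⊆ closedBall (ctr B 0) (rad B 0))
    (hkx : ball (ctr B k) (rad B k) ⊆ (closedBall x.1 x.2)ᶜ ∨
      ∃ m, 1 ≤ m ∧ m ≠ k ∧ ball (ctr B k) (rad B k) ⊆ ball (ctr B m) (rad B m)) :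
    Function.update (eraseHole B k) 0 x ∈ Stilde A := by
  set C := Function.update (eraseHole B k) 0 x
  have hC0 : closedBall (ctr C 0) (rad C 0) = closedBall x.1 x.2 := by
    simp [C, ctr, rad]
  have hhole : ∀ n, 1 ≤ n → n ≠ k →
      ∃ m, 1 ≤ m ∧ ball (ctr B n) (rad B n) ⊆ ball (ctr C m) (rad C m) := by
    intro n hn hnk
    obtain ⟨m, hm, hCm⟩ := exists_update_eraseHole_eq (B := B) (x := x) hk hn hnk
    exact ⟨m, hm, by rw [ctr_eq_of_apply_eq hCm, rad_eq_of_apply_eq hCm]⟩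
  refine mem_Stilde_of_partiallyAbove hB (memN_update_zero (memN_eraseHole hB.1.1 hk))
    (muSup_update_zero.trans_le muSup_eraseHole_le)
    (rhoSum_update_zero.trans_le (le_self_add.trans (rhoSum_eraseHole_add hk).le))
    ⟨hC0 ▸ hx, fun n hn => ?_⟩
  rw [hC0]
  by_cases hnk : n = k
  · subst hnk
    rcases hkx with hout | ⟨m, hm, hmn, hnm⟩
    · exact Or.inl hout
    · obtain ⟨m', hm', hmm'⟩ := hhole m hm hmn
      exact Or.inr ⟨m', hm', hnm.trans hmm'⟩
  · exact Or.inr (hhole n hn hnk)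

lemma delta1Real_le_of_mem_S1 (hB : B ∈ S1 A) (hC : C ∈ Stilde A) :
    delta1Real C ≤ delta1Real B := by
  have h : delta1 C ≤ delta1 B := hB.2 ▸ le_sSup ⟨C, hC, rfl⟩
  rwa [delta1_eq_delta1Real hC.1.1.1.ne, delta1_eq_delta1Real hB.1.1.1.1.ne,
    EReal.coe_le_coe_iff] at h

lemma mem_S1_of_delta1Real_eq (hB : B ∈ S1 A) (hC : C ∈ Stilde A)
    (h : delta1Real C = delta1Real B) : C ∈ S1 A :=
  ⟨hC, by rw [delta1_eq_delta1Real hC.1.1.1.ne, h, ← delta1_eq_delta1Real hB.1.1.1.1.ne, hB.2]⟩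

lemma self_mem_Stilde (hN : memN A) : A ∈ Stilde A :=
  ⟨⟨hN, le_rfl, le_rfl⟩, subset_rfl, fun n hn => Or.inr ⟨n, hn, subset_rfl⟩⟩

lemma delta1Real_pos_of_mem_S1 (hN : memN A) (hA : 0 < delta1 A) (hB : B ∈ S1 A) :
    0 < delta1Real B := by
  rw [delta1_eq_delta1Real hN.1.ne, EReal.coe_pos] at hA
  exact hA.trans_le (delta1Real_le_of_mem_S1 hB (self_mem_Stilde hN))

end Cheeses

section LineGeometry

variable {E : Type*} [NormedAddCommGroup E] [NormedSpace ℝ E] {a b : E} {θ r s : ℝ}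

lemma ball_subset_ball_lineMap_left (hθ : 0 ≤ θ) (h : s + θ * dist a b ≤ r) :
    ball a s ⊆ ball (lineMap a b θ) r :=
  ball_subset_ball' (by rwa [dist_comm, dist_lineMap_left, Real.norm_of_nonneg hθ])

lemma ball_subset_ball_lineMap_right (hθ : θ ≤ 1) (h : s + (1 - θ) * dist a b ≤ r) :
    ball b s ⊆ ball (lineMap a b θ) r :=
  ball_subset_ball' (by rwa [dist_comm, dist_lineMap_right, Real.norm_of_nonneg (by linarith)])

lemma norm_lineMap_le_max (h0 : 0 ≤ θ) (h1 : θ ≤ 1) : ‖lineMap a b θ‖ ≤ max ‖a‖ ‖b‖ := by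
  simpa using (convex_closedBall (0 : E) (max ‖a‖ ‖b‖)).lineMap_mem
    (by simp) (by simp) ⟨h0, h1⟩

end LineGeometry

section Merge

variable {A B : ASC} {k l : ℕ}

lemma exists_eraseHole_eraseHole (hB : memN B) (hk : 1 ≤ k) (hl : 1 ≤ l) (hkl : k ≠ l) :
    ∃ D, memN D ∧ D 0 = B 0 ∧ rhoSum D + (B k).2 + (B l).2 = rhoSum B ∧
      muSup D ≤ muSup B ∧ ∀ j, 1 ≤ j → j ≠ k → j ≠ l → ∃ j', 1 ≤ j' ∧ D j' = B j := by
  obtain ⟨l', rfl⟩ := exists_skipIdx_eq hkl.symm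
  have hl' := one_le_of_one_le_skipIdx hk hl
  refine ⟨eraseHole (eraseHole B k) l', memN_eraseHole (memN_eraseHole hB hk) hl',
    by rw [eraseHole_zero hl', eraseHole_zero hk], ?_,
    muSup_eraseHole_le.trans muSup_eraseHole_le, fun j hj hjk hjl => ?_⟩
  · rw [← rhoSum_eraseHole_add (B := B) hk, ← rhoSum_eraseHole_add (B := eraseHole B k) hl',
      add_right_comm]
    rfl
  · obtain ⟨j₁, rfl⟩ := exists_skipIdx_eq hjk
    obtain ⟨j₂, rfl⟩ := exists_skipIdx_eq (k := l') (m := j₁) (by rintro rfl; exact hjl rfl)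
    exact ⟨j₂, one_le_of_one_le_skipIdx hl' (one_le_of_one_le_skipIdx hk hj), rfl⟩

lemma exists_merge_mem_Stilde (hB : B ∈ Stilde A) (hk : k ∈ SIdx B) (hl : 1 ≤ l) (hkl : k ≠ l)
    {θ : ℝ} (hθ0 : 0 ≤ θ) (hθ1 : θ ≤ 1) {r : ℝ≥0}
    (hrk : rad B k + θ * dist (ctr B k) (ctr B l) ≤ r)
    (hrl : rad B l + (1 - θ) * dist (ctr B k) (ctr B l) ≤ r)
    (hr : (r : ℝ) ≤ rad B k + rad B l) :
    ∃ C ∈ Stilde A, C 0 = B 0 ∧ delta1Real C = delta1Real B + rad B k + rad B l - r ∧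
      ∃ p, 1 ≤ p ∧ C p = (lineMap (ctr B k) (ctr B l) θ, r) ∧
        ∀ j, 1 ≤ j → j ≠ k → j ≠ l → ∃ j', 1 ≤ j' ∧ j' ≠ p ∧ C j' = B j := by
  set c := lineMap (ctr B k) (ctr B l) θ
  obtain ⟨D, hD, hD0, hρD, hμD, hDB⟩ := exists_eraseHole_eraseHole hB.1.1 hk.1 hl hkl
  have hr0 : 0 < r := by
    rw [← NNReal.coe_pos]
    linarith [hk.2, mul_nonneg hθ0 (dist_nonneg (x := ctr B k) (y := ctr B l))]
  obtain ⟨p, hp, hC⟩ := exists_memN_insertHole (x := (c, r)) hD hr0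
  set C := insertHole D p (c, r)
  have hC0 : C 0 = B 0 := (insertHole_zero hp).trans hD0
  have hCp : ball (ctr C p) (rad C p) = ball c r := by simp [C, ctr, rad, insertHole_self]
  have hCB : ∀ j, 1 ≤ j → j ≠ k → j ≠ l → ∃ j', 1 ≤ j' ∧ j' ≠ p ∧ C j' = B j := by
    intro j hj hjk hjl
    obtain ⟨j', hj', hDj⟩ := hDB j hj hjk hjl
    exact ⟨skipIdx p j', one_le_skipIdx hj', skipIdx_ne p j', by simp [C, insertHole_skipIdx, hDj]⟩
  have hρ : rhoSum C + ((B k).2 + (B l).2) = rhoSum B + r := by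
    rw [rhoSum_insertHole hp, ← hρD]; ring
  have hμc : (‖c‖₊ : ℝ≥0∞) ≤ muSup B := by
    rcases le_max_iff.1 (norm_lineMap_le_max (a := ctr B k) (b := ctr B l) hθ0 hθ1) with h | h
    · exact le_trans (by exact_mod_cast h) (nnnorm_le_muSup hk.1)
    · exact le_trans (by exact_mod_cast h) (nnnorm_le_muSup hl)
  refine ⟨C, mem_Stilde_of_partiallyAbove hB hC
    ((muSup_insertHole_le hp).trans (max_le hμD hμc)) ?_
    (partiallyAbove_of_forall_subset hC0 fun n hn => ?_), hC0, ?_, p, hp, insertHole_self, hCB⟩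
  · refine (ENNReal.add_le_add_iff_right (a := r) ENNReal.coe_ne_top).1 (hρ ▸ ?_)
    gcongr
    rw [← ENNReal.coe_add, ENNReal.coe_le_coe, ← NNReal.coe_le_coe]
    exact hr
  · by_cases hnk : n = k
    · exact ⟨p, hp, hCp ▸ hnk ▸ ball_subset_ball_lineMap_left hθ0 hrk⟩
    by_cases hnl : n = l
    · exact ⟨p, hp, hCp ▸ hnl ▸ ball_subset_ball_lineMap_right hθ1 hrl⟩
    obtain ⟨j', hj', -, hCj⟩ := hCB n hn hnk hnl
    exact ⟨j', hj', by rw [ctr_eq_of_apply_eq hCj, rad_eq_of_apply_eq hCj]⟩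
  · have := toReal_rhoSum_add_eq (a := (B k).2 + (B l).2) hB.1.1.1.ne (by exact_mod_cast hρ)
    simp only [delta1Real, rad, hC0, NNReal.coe_add] at this ⊢
    linarith

end Merge

section CutGeometry

variable {E : Type*} [NormedAddCommGroup E] [NormedSpace ℝ E] {a b : E} {r s t : ℝ}

lemma closedBall_lineMap_neg_subset (ht : 0 ≤ t) (hd : 0 < dist a b) :
    closedBall (lineMap a b (-t / dist a b)) (s - t) ⊆ closedBall a s :=
  closedBall_subset_closedBall' (by
    rw [dist_lineMap_left, norm_div, norm_neg, Real.norm_of_nonneg ht, Real.norm_of_nonneg hd.le,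
      div_mul_cancel₀ _ hd.ne']
    linarith)

lemma disjoint_ball_closedBall_lineMap_neg (ht : 0 ≤ t) (hd : 0 < dist a b)
    (h : s + r ≤ dist a b + 2 * t) :
    Disjoint (ball b r) (closedBall (lineMap a b (-t / dist a b)) (s - t)) :=
  ball_disjoint_closedBall (by
    rw [dist_comm, dist_lineMap_right, neg_div, sub_neg_eq_add, Real.norm_of_nonneg (by positivity),
      add_mul, one_mul, div_mul_cancel₀ _ hd.ne']
    linarith)

end CutGeometry

/-- Shrink the outer disc by `t`, pushing its centre away from hole `k`, and delete hole `k`. -/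
def cutHole (B : ASC) (k : ℕ) (t : ℝ) : ASC :=
  Function.update (eraseHole B k) 0
    (lineMap (ctr B 0) (ctr B k) (-t / dist (ctr B 0) (ctr B k)), (rad B 0 - t).toNNReal)

section Cut

variable {A B : ASC} {k : ℕ} {t : ℝ}

lemma ctr_cutHole_zero :
    ctr (cutHole B k t) 0 = lineMap (ctr B 0) (ctr B k) (-t / dist (ctr B 0) (ctr B k)) := by
  simp [cutHole, ctr]

lemma rad_cutHole_zero (ht : t ≤ rad B 0) : rad (cutHole B k t) 0 = rad B 0 - t := by
  simpa [cutHole, rad] using ht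

lemma cutHole_mem_Stilde (hB : B ∈ Stilde A) (hk : 1 ≤ k) (ht : 0 ≤ t) (htr : t ≤ rad B 0)
    (hd : 0 < dist (ctr B 0) (ctr B k))
    (h : rad B 0 + rad B k ≤ dist (ctr B 0) (ctr B k) + 2 * t) : cutHole B k t ∈ Stilde A := by
  have hr : (((rad B 0 - t).toNNReal : ℝ≥0) : ℝ) = rad B 0 - t :=
    Real.coe_toNNReal _ (by linarith)
  refine update_eraseHole_mem_Stilde hB hk ?_ (Or.inl ?_)
  · rw [hr]; exact closedBall_lineMap_neg_subset ht hd
  · rw [hr]; exact (disjoint_ball_closedBall_lineMap_neg ht hd h).subset_compl_right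

lemma delta1Real_cutHole (hB : rhoSum B ≠ ⊤) (hk : 1 ≤ k) (htr : t ≤ rad B 0) :
    delta1Real (cutHole B k t) = delta1Real B + rad B k - t := by
  rw [cutHole, delta1Real_update_eraseHole hB hk, Real.coe_toNNReal _ (by linarith)]
  ring

end Cut

section Maximizers

variable {A B : ASC} {k l : ℕ}

lemma update_eraseHole_notMem_Stilde (hB : B ∈ S1 A) (hk : k ∈ SIdx B) :
    Function.update (eraseHole B k) 0 (B 0) ∉ Stilde A := fun hC => by
  have h := delta1Real_le_of_mem_S1 hB hC
  rw [delta1Real_update_eraseHole hB.1.1.1.1.ne hk.1] at h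
  have : ((B 0).2 : ℝ) = rad B 0 := rfl
  linarith [hk.2]

lemma not_ball_subset_ball_of_mem_S1 (hB : B ∈ S1 A) (hk : k ∈ SIdx B) (hl : 1 ≤ l)
    (hkl : k ≠ l) : ¬ ball (ctr B k) (rad B k) ⊆ ball (ctr B l) (rad B l) := fun hsub =>
  update_eraseHole_notMem_Stilde hB hk
    (update_eraseHole_mem_Stilde hB.1 hk.1 subset_rfl (Or.inr ⟨l, hl, hkl.symm, hsub⟩))

lemma not_disjoint_ball_closedBall_of_mem_S1 (hB : B ∈ S1 A) (hk : k ∈ SIdx B) :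
    ¬ Disjoint (ball (ctr B k) (rad B k)) (closedBall (ctr B 0) (rad B 0)) := fun hdisj =>
  update_eraseHole_notMem_Stilde hB hk
    (update_eraseHole_mem_Stilde hB.1 hk.1 subset_rfl (Or.inl hdisj.subset_compl_right))

lemma rad_add_rad_le_dist_of_mem_S1 (hB : B ∈ S1 A) (hk : k ∈ SIdx B) (hl : l ∈ SIdx B)
    (hkl : k ≠ l) : rad B k + rad B l ≤ dist (ctr B k) (ctr B l) := by
  by_contra! hlt
  set d := dist (ctr B k) (ctr B l)
  have hkd : rad B k < d + rad B l := by
    by_contra! h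
    exact not_ball_subset_ball_of_mem_S1 hB hl hk.1 hkl.symm
      (ball_subset_ball' (by rw [dist_comm]; linarith))
  have hld : rad B l < d + rad B k := by
    by_contra! h
    exact not_ball_subset_ball_of_mem_S1 hB hk hl.1 hkl (ball_subset_ball' (by linarith))
  have hd : 0 < d := by linarith [hk.2, hl.2]
  have hθd : (d + rad B l - rad B k) / (2 * d) * d = (d + rad B l - rad B k) / 2 := by
    field_simp
  set r : ℝ≥0 := ⟨(rad B k + rad B l + d) / 2, by linarith [hk.2, hl.2]⟩
  have hr : (r : ℝ) = (rad B k + rad B l + d) / 2 := rfl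
  obtain ⟨C, hC, -, hδ, -⟩ := exists_merge_mem_Stilde hB.1 hk hl.1 hkl
    (θ := (d + rad B l - rad B k) / (2 * d)) (r := r)
    (div_nonneg (by linarith) (by positivity)) ((div_le_one (by positivity)).2 (by linarith))
    (by rw [hθd, hr]; linarith) (by rw [sub_mul, one_mul, hθd, hr]; linarith) (by rw [hr]; linarith)
  have := delta1Real_le_of_mem_S1 hB hC
  rw [hδ, hr] at this
  linarith

lemma disjoint_ball_ball_of_mem_S1 (hB : B ∈ S1 A) (hk : k ∈ SIdx B) (hl : l ∈ SIdx B)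
    (hkl : k ≠ l) : Disjoint (ball (ctr B k) (rad B k)) (ball (ctr B l) (rad B l)) :=
  ball_disjoint_ball (rad_add_rad_le_dist_of_mem_S1 hB hk hl hkl)

lemma dist_add_rad_le_of_mem_S1 (hB : B ∈ S1 A) (hpos : 0 < delta1Real B) (hk : k ∈ SIdx B) :
    dist (ctr B 0) (ctr B k) + rad B k ≤ rad B 0 := by
  by_contra! hlt
  have hk0 := rad_lt_rad_zero hB.1.1.1.1.ne hpos hk.1
  have hmeet : dist (ctr B 0) (ctr B k) < rad B 0 + rad B k := by
    by_contra! h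
    exact not_disjoint_ball_closedBall_of_mem_S1 hB hk
      (ball_disjoint_closedBall (by rw [dist_comm]; linarith))
  have hC := cutHole_mem_Stilde (t := (rad B 0 + rad B k - dist (ctr B 0) (ctr B k)) / 2) hB.1
    hk.1 (by linarith) (by linarith) (by linarith) (by linarith)
  have := delta1Real_le_of_mem_S1 hB hC
  rw [delta1Real_cutHole hB.1.1.1.1.ne hk.1 (by linarith)] at this
  linarith

lemma closedBall_subset_closedBall_of_mem_S1 (hB : B ∈ S1 A) (hpos : 0 < delta1Real B)
    (hk : k ∈ SIdx B) : closedBall (ctr B k) (rad B k) ⊆ closedBall (ctr B 0) (rad B 0) :=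
  closedBall_subset_closedBall' (by rw [dist_comm]; linarith [dist_add_rad_le_of_mem_S1 hB hpos hk])

end Maximizers

lemma lt_dist_lineMap_add_mul_I {a b : ℂ} (hab : a ≠ b) {τ : ℝ} (hτ : τ ≠ 0) (s t : ℝ) :
    |s - t| * dist a b < dist (lineMap a b s + τ * Complex.I * (b - a)) (lineMap a b t) := by
  have h : lineMap a b s + τ * Complex.I * (b - a) - lineMap a b t =
      (((s - t : ℝ) : ℂ) + τ * Complex.I) * (b - a) := by
    simp only [AffineMap.lineMap_apply_module', Complex.real_smul]
    push_cast; ring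
  rw [dist_eq_norm (lineMap a b s + _), h, norm_mul, Complex.norm_add_mul_I, ← dist_eq_norm']
  refine mul_lt_mul_of_pos_right ((Real.lt_sqrt (abs_nonneg _)).2 ?_) (dist_pos.2 hab)
  rw [sq_abs]
  linarith [pow_pos (abs_pos.2 hτ) 2, sq_abs τ]

lemma exists_mem_ball_of_interior_Xset_eq_empty {B : ASC} (hint : interior (Xset B) = ∅)
    {U : Set ℂ} (hU : IsOpen U) (hne : U.Nonempty)
    (hsub : U ⊆ closedBall (ctr B 0) (rad B 0)) :
    ∃ w ∈ U, ∃ j, 1 ≤ j ∧ w ∈ ball (ctr B j) (rad B j) := by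
  have hUX : ¬ U ⊆ Xset B := fun hUX =>
    hne.ne_empty (subset_empty_iff.1 (hint ▸ interior_maximal hUX hU))
  obtain ⟨w, hwU, hwX⟩ := not_subset.1 hUX
  have hw : w ∈ ⋃ n : ℕ, ball (ctr B (n + 1)) (rad B (n + 1)) :=
    by_contra fun hw => hwX ⟨hsub hwU, hw⟩
  obtain ⟨n, hn⟩ := mem_iUnion.1 hw
  exact ⟨w, hwU, n + 1, by omega, hn⟩

/-- Both discs have their centres on the line through `a` and `b` and pass through
`lineMap a b s`, so a point slightly off that line, orthogonally, lies in neither. -/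
lemma exists_hole_near_lineMap {B : ASC} (hint : interior (Xset B) = ∅) {a b : ℂ} (hab : a ≠ b)
    {V : Set ℂ} (hV : IsOpen V) (hVB : V ⊆ closedBall (ctr B 0) (rad B 0)) {s : ℝ}
    (hs : lineMap a b s ∈ V) (t₁ t₂ : ℝ) :
    ∃ w ∈ V, w ∉ closedBall (lineMap a b t₁) (|s - t₁| * dist a b) ∧
      w ∉ closedBall (lineMap a b t₂) (|s - t₂| * dist a b) ∧
      ∃ j, 1 ≤ j ∧ w ∈ ball (ctr B j) (rad B j) := by
  have hd := dist_pos.2 hab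
  obtain ⟨ε, hε, hball⟩ := Metric.isOpen_iff.1 hV _ hs
  have hτ : ε / (2 * dist a b) ≠ 0 := by positivity
  set x := lineMap a b s + (ε / (2 * dist a b) : ℝ) * Complex.I * (b - a)
  have hxV : x ∈ V := hball (by
    rw [mem_ball, dist_self_add_left, norm_mul, norm_mul, Complex.norm_I, mul_one,
      ← dist_eq_norm', Complex.norm_real, Real.norm_of_nonneg (by positivity)]
    field_simp
    linarith)
  have hU : IsOpen (V ∩ (closedBall (lineMap a b t₁) (|s - t₁| * dist a b))ᶜ ∩
      (closedBall (lineMap a b t₂) (|s - t₂| * dist a b))ᶜ) :=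
    (hV.inter isClosed_closedBall.isOpen_compl).inter isClosed_closedBall.isOpen_compl
  obtain ⟨w, ⟨⟨hwV, hw₁⟩, hw₂⟩, hj⟩ := exists_mem_ball_of_interior_Xset_eq_empty hint hU
    ⟨x, ⟨hxV, fun hx => (mem_closedBall.1 hx).not_gt (lt_dist_lineMap_add_mul_I hab hτ s t₁)⟩,
      fun hx => (mem_closedBall.1 hx).not_gt (lt_dist_lineMap_add_mul_I hab hτ s t₂)⟩
    (inter_subset_left.trans (inter_subset_left.trans hVB))
  exact ⟨w, hwV, hw₁, hw₂, hj⟩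

section Tangency

variable {A B : ASC} {k l : ℕ}

lemma closedBall_subset_ball_of_mem_S1 (hint : interior (Xset B) = ∅) (hB : B ∈ S1 A)
    (hpos : 0 < delta1Real B) (hk : k ∈ SIdx B) :
    closedBall (ctr B k) (rad B k) ⊆ ball (ctr B 0) (rad B 0) := by
  rcases (dist_add_rad_le_of_mem_S1 hB hpos hk).lt_or_eq with hlt | heq
  · exact closedBall_subset_ball' (by rw [dist_comm]; linarith)
  exfalso
  have hk0 := rad_lt_rad_zero hB.1.1.1.1.ne hpos hk.1
  have hd : 0 < dist (ctr B 0) (ctr B k) := by linarith [hk.2]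
  set d := dist (ctr B 0) (ctr B k) with hd_def
  have hδ : delta1Real (cutHole B k (rad B k)) = delta1Real B := by
    rw [delta1Real_cutHole hB.1.1.1.1.ne hk.1 hk0.le]; ring
  have hC := mem_S1_of_delta1Real_eq hB
    (cutHole_mem_Stilde hB.1 hk.1 hk.2.le hk0.le hd (by linarith)) hδ
  -- the new outer disc and the hole `k` touch at `lineMap (ctr B 0) (ctr B k) (1 - rad B k / d)`
  have hz : lineMap (ctr B 0) (ctr B k) (1 - rad B k / d) ∈ ball (ctr B 0) (rad B 0) := by
    rw [mem_ball, dist_lineMap_left, ← hd_def, Real.norm_eq_abs, one_sub_div hd.ne', abs_div,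
      abs_of_pos hd, div_mul_cancel₀ _ hd.ne', abs_lt]
    constructor <;> linarith [hk.2]
  obtain ⟨w, -, hw₀, hwk, j, hj, hwj⟩ := exists_hole_near_lineMap hint (dist_pos.1 hd)
    isOpen_ball ball_subset_closedBall hz (-rad B k / d) 1
  rw [show 1 - rad B k / d - -rad B k / d = 1 by ring, abs_one, one_mul] at hw₀
  rw [show 1 - rad B k / d - 1 = -(rad B k / d) by ring, abs_neg, abs_of_pos (div_pos hk.2 hd),
    div_mul_cancel₀ _ hd.ne', AffineMap.lineMap_apply_one] at hwk
  have hjk : j ≠ k := by rintro rfl; exact hwk (ball_subset_closedBall hwj)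
  obtain ⟨j', hj', hCj⟩ : ∃ j', 1 ≤ j' ∧ cutHole B k (rad B k) j' = B j :=
    exists_update_eraseHole_eq hk.1 hj hjk
  have hsub := closedBall_subset_closedBall_of_mem_S1 hC (hδ ▸ hpos) (k := j')
    ⟨hj', rad_eq_of_apply_eq hCj ▸ pos_of_mem_ball hwj⟩
  rw [ctr_cutHole_zero, rad_cutHole_zero hk0.le, show rad B 0 - rad B k = d by linarith,
    ctr_eq_of_apply_eq hCj, rad_eq_of_apply_eq hCj] at hsub
  exact hw₀ (hsub (ball_subset_closedBall hwj))

lemma exists_mem_S1_merge_of_rad_add_rad_eq (hB : B ∈ S1 A) (hk : k ∈ SIdx B)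
    (hl : l ∈ SIdx B) (hkl : k ≠ l) (heq : rad B k + rad B l = dist (ctr B k) (ctr B l)) :
    ∃ C ∈ S1 A, ∃ p ∈ SIdx C, ball (ctr C p) (rad C p) =
        ball (lineMap (ctr B k) (ctr B l) (rad B l / dist (ctr B k) (ctr B l)))
          (dist (ctr B k) (ctr B l)) ∧
      ∀ j ∈ SIdx B, j ≠ k → j ≠ l →
        ∃ j' ∈ SIdx C, j' ≠ p ∧ ball (ctr C j') (rad C j') = ball (ctr B j) (rad B j) := by
  have hd : 0 < dist (ctr B k) (ctr B l) := by linarith [hk.2, hl.2]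
  set d := dist (ctr B k) (ctr B l)
  set r : ℝ≥0 := ⟨d, hd.le⟩
  have hr : (r : ℝ) = d := rfl
  obtain ⟨C, hCS, -, hδ, p, hp, hCp, hCB⟩ := exists_merge_mem_Stilde hB.1 hk hl.1 hkl
    (θ := rad B l / d) (r := r) (div_nonneg hl.2.le hd.le) ((div_le_one hd).2 (by linarith [hk.2]))
    (by rw [div_mul_cancel₀ _ hd.ne', hr]; linarith)
    (by rw [sub_mul, one_mul, div_mul_cancel₀ _ hd.ne', hr]; linarith) (by rw [hr]; linarith)
  refine ⟨C, mem_S1_of_delta1Real_eq hB hCS (by rw [hδ, hr]; linarith), p,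
    ⟨hp, show 0 < ((C p).2 : ℝ) by rw [hCp]; exact hd⟩, by simp [ctr, rad, hCp, hr],
    fun j hj hjk hjl => ?_⟩
  obtain ⟨j', hj', hj'p, hCj⟩ := hCB j hj.1 hjk hjl
  exact ⟨j', ⟨hj', rad_eq_of_apply_eq hCj ▸ hj.2⟩, hj'p,
    by rw [ctr_eq_of_apply_eq hCj, rad_eq_of_apply_eq hCj]⟩

lemma disjoint_closedBall_of_mem_S1 (hint : interior (Xset B) = ∅) (hB : B ∈ S1 A)
    (hpos : 0 < delta1Real B) (hk : k ∈ SIdx B) (hl : l ∈ SIdx B) (hkl : k ≠ l) :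
    Disjoint (closedBall (ctr B k) (rad B k)) (closedBall (ctr B l) (rad B l)) := by
  rcases (rad_add_rad_le_dist_of_mem_S1 hB hk hl hkl).lt_or_eq with hlt | heq
  · exact closedBall_disjoint_closedBall hlt
  exfalso
  obtain ⟨C, hC, p, hp, hCp, hCB⟩ := exists_mem_S1_merge_of_rad_add_rad_eq hB hk hl hkl heq
  have hd : 0 < dist (ctr B k) (ctr B l) := by linarith [hk.2, hl.2]
  set d := dist (ctr B k) (ctr B l) with hd_def
  set c := lineMap (ctr B k) (ctr B l) (rad B l / d)
  -- the holes `k` and `l` touch at `lineMap (ctr B k) (ctr B l) (rad B k / d)`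
  have hzk : dist (lineMap (ctr B k) (ctr B l) (rad B k / d)) (ctr B k) = rad B k := by
    rw [dist_lineMap_left, ← hd_def, Real.norm_of_nonneg (div_pos hk.2 hd).le,
      div_mul_cancel₀ _ hd.ne']
  have hzc : dist (lineMap (ctr B k) (ctr B l) (rad B k / d)) c < d := by
    rw [dist_lineMap_lineMap, ← hd_def, Real.dist_eq, ← sub_div, abs_div, abs_of_pos hd,
      div_mul_cancel₀ _ hd.ne', abs_sub_lt_iff]
    constructor <;> linarith [hk.2, hl.2]
  obtain ⟨w, ⟨-, hwc⟩, hwk, hwl, j, hj, hwj⟩ := exists_hole_near_lineMap hint (dist_pos.1 hd)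
    (isOpen_ball.inter isOpen_ball) (inter_subset_left.trans ball_subset_closedBall)
    ⟨closedBall_subset_ball_of_mem_S1 hint hB hpos hk hzk.le, hzc⟩ 0 1
  have hrk : |rad B k / d - 0| * d = rad B k := by
    rw [sub_zero, abs_of_pos (div_pos hk.2 hd), div_mul_cancel₀ _ hd.ne']
  have hrl : |rad B k / d - 1| * d = rad B l := by
    rw [abs_sub_comm, abs_of_pos (by rw [sub_pos, div_lt_one hd]; linarith [hl.2]), sub_mul,
      one_mul, div_mul_cancel₀ _ hd.ne']
    linarith
  rw [hrk, AffineMap.lineMap_apply_zero] at hwk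
  rw [hrl, AffineMap.lineMap_apply_one] at hwl
  have hjk : j ≠ k := by rintro rfl; exact hwk (ball_subset_closedBall hwj)
  have hjl : j ≠ l := by rintro rfl; exact hwl (ball_subset_closedBall hwj)
  obtain ⟨j', hj', hj'p, hCj⟩ := hCB j ⟨hj, pos_of_mem_ball hwj⟩ hjk hjl
  have hdisj := disjoint_ball_ball_of_mem_S1 hC hj' hp hj'p
  rw [hCj, hCp] at hdisj
  exact disjoint_left.1 hdisj hwj hwc

end Tangency

theorem stmt11_general (A : ASC) (hN : memN A) (hd : 0 < delta1 A)
    (hint : interior (Xset A) = ∅) :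
    ∀ B ∈ S1 A, IsClassicalASC B := by
  intro B hB
  have hpos := delta1Real_pos_of_mem_S1 hN hd hB
  have hintB : interior (Xset B) = ∅ :=
    subset_empty_iff.1 (hint ▸ interior_mono (Xset_subset_of_partiallyAbove hB.1.2))
  refine ⟨hB.1.1.1.1, ?_, fun k hk => ⟨closedBall_subset_ball_of_mem_S1 hintB hB hpos hk,
    fun l hl hlk => (disjoint_closedBall_of_mem_S1 hintB hB hpos hk hl hlk.symm).inter_eq⟩⟩
  have : 0 ≤ (rhoSum B).toReal := ENNReal.toReal_nonneg
  unfold delta1Real at hpos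
  linarith

/-- Theorem 4.10: if `X_A` has empty interior, then every abstract Swiss
cheese in `S₁` is classical. -/
theorem stmt11 (A : ASC) (hN : memN A) (hrf : RedundancyFree A) (hd : 0 < delta1 A)
    (hint : interior (Xset A) = ∅) :
    ∀ B ∈ S1 A, IsClassicalASC B :=
  stmt11_general A hN hd hint

end
end

section
/- Let U be a non-empty open subset of ℂ. For each m let A^(m) be an abstract Swiss cheese, and suppose A^(m) → A in abstract Swiss cheese space F as m → ∞. Then ρ_U(A) ≤ liminf_{m→∞} ρ_U(A^(m)). -/
open Metric Set Filter Topology ENNReal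

noncomputable section

/-- Lemma 5.1: lower semicontinuity of the local radius sum `ρ_U` along
convergent sequences, for `U` open and non-empty. -/
theorem stmt12 (U : Set ℂ) (hUo : IsOpen U) (hUne : U.Nonempty)
    (A' : ℕ → ASC) (A : ASC) (hconv : Tendsto A' atTop (nhds A)) :
    rhoLoc A U ≤ Filter.liminf (fun m => rhoLoc (A' m) U) atTop := by
  -- pointwise convergence of coordinates
  have hpt : ∀ n, Tendsto (fun m => A' m n) atTop (nhds (A n)) :=
    tendsto_pi_nhds.mp hconv
  -- key: each index in HIdx A U is eventually in HIdx (A' m) U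
  have hev : ∀ n ∈ HIdx A U, ∀ᶠ m in atTop, n ∈ HIdx (A' m) U := by
    intro n hn
    obtain ⟨⟨hn1, hnr⟩, z, hz1, hz2⟩ := hn
    obtain ⟨ε, hε, hball⟩ := Metric.isOpen_iff.mp hUo z hz2
    have hc : Tendsto (fun m => ctr (A' m) n) atTop (nhds (ctr A n)) :=
      ((continuous_fst.tendsto _).comp (hpt n))
    have hr : Tendsto (fun m => rad (A' m) n) atTop (nhds (rad A n)) :=
      ((NNReal.continuous_coe.tendsto _).comp ((continuous_snd.tendsto _).comp (hpt n)))
    have h1 : ∀ᶠ m in atTop, 0 < rad (A' m) n := hr.eventually (eventually_gt_nhds hnr)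
    have h2 : ∀ᶠ m in atTop, dist (ctr (A' m) n) (ctr A n) < ε / 2 :=
      (tendsto_iff_dist_tendsto_zero.mp hc).eventually
        (Filter.Tendsto.eventually_lt_const (by positivity) tendsto_id)
    have h3 : ∀ᶠ m in atTop, rad A n - ε / 2 < rad (A' m) n :=
      hr.eventually (eventually_gt_nhds (by linarith))
    filter_upwards [h1, h2, h3] with m hm1 hm2 hm3
    refine ⟨⟨hn1, hm1⟩, ?_⟩
    have hdz : dist (ctr (A' m) n) z < ε + rad (A' m) n := by
      have hzc : dist z (ctr A n) ≤ rad A n := mem_closedBall.mp hz1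
      calc dist (ctr (A' m) n) z ≤ dist (ctr (A' m) n) (ctr A n) + dist (ctr A n) z :=
            dist_triangle _ _ _
        _ < ε / 2 + rad A n := by rw [dist_comm (ctr A n) z]; linarith
        _ < ε + rad (A' m) n := by linarith
    obtain ⟨y, hy1, hy2⟩ := exists_dist_le_lt hm1.le hε hdz
    exact ⟨y, mem_closedBall.mpr (by rwa [dist_comm]), hball (mem_ball.mpr hy2)⟩
  -- reduce to finite sums
  rw [rhoLoc, tsum_subtype (HIdx A U) (fun k => ((A k).2 : ℝ≥0∞)), ENNReal.tsum_eq_iSup_sum]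
  refine iSup_le fun s => ?_
  set f : ASC → ℕ → ℝ≥0∞ := fun B n => (HIdx A U).indicator (fun k => ((B k).2 : ℝ≥0∞)) n
    with hf
  -- the approximating finite sums
  have htend : Tendsto (fun m => ∑ n ∈ s, f (A' m) n) atTop (nhds (∑ n ∈ s, f A n)) := by
    refine tendsto_finset_sum _ fun n _ => ?_
    by_cases hn : n ∈ HIdx A U
    · simp only [hf, indicator_of_mem hn]
      exact (ENNReal.continuous_coe.tendsto _).comp ((continuous_snd.tendsto _).comp (hpt n))
    · simp only [hf, indicator_of_notMem hn]
      exact tendsto_const_nhds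
  have hle : ∀ᶠ m in atTop, (∑ n ∈ s, f (A' m) n) ≤ rhoLoc (A' m) U := by
    have : ∀ᶠ m in atTop, ∀ n ∈ s, n ∈ HIdx A U → n ∈ HIdx (A' m) U := by
      rw [eventually_all_finset]
      intro n _
      by_cases hn : n ∈ HIdx A U
      · filter_upwards [hev n hn] with m hm _ using hm
      · filter_upwards with m hm using absurd hm hn
    filter_upwards [this] with m hm
    calc (∑ n ∈ s, f (A' m) n)
        ≤ ∑ n ∈ s, (HIdx (A' m) U).indicator (fun k => (((A' m) k).2 : ℝ≥0∞)) n := by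
          refine Finset.sum_le_sum fun n hns => ?_
          by_cases hn : n ∈ HIdx A U
          · simp only [hf, indicator_of_mem hn, indicator_of_mem (hm n hns hn), le_refl]
          · simp [hf, indicator_of_notMem hn]
      _ ≤ ∑' n : ℕ, (HIdx (A' m) U).indicator (fun k => (((A' m) k).2 : ℝ≥0∞)) n :=
          ENNReal.sum_le_tsum s
      _ = rhoLoc (A' m) U := by
          rw [rhoLoc, tsum_subtype (HIdx (A' m) U) (fun k => (((A' m) k).2 : ℝ≥0∞))]
  calc (∑ n ∈ s, f A n) = liminf (fun m => ∑ n ∈ s, f (A' m) n) atTop :=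
        htend.liminf_eq.symm
    _ ≤ liminf (fun m => rhoLoc (A' m) U) atTop := liminf_le_liminf hle

end
end

section
/- Let a ∈ ℂ, let r₀ > r₁ > 0, and let K = B̄(a, r₀) \ B(a, r₁). Let b ∈ ℂ and 0 < s < (r₀ − r₁)/2 with B̄(b, s) ∩ closure(ℂ \ K) ≠ ∅. Then there exist r₀', r₁' > 0 such that K' := B̄(a, r₀') \ B(a, r₁') ⊆ K, K' ∩ B(b, s) = ∅, and r₀' − r₁' ≥ r₀ − r₁ − 2s. -/
open Metric Set Filter Topology ENNReal

noncomputable section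

/-- Lemma 6.1: pulling in an annulus away from a small disk. -/
theorem stmt17 (a : ℂ) (r₀ r₁ : ℝ) (h₁ : 0 < r₁) (h₀₁ : r₁ < r₀)
    (b : ℂ) (s : ℝ) (hs : 0 < s) (hs2 : s < (r₀ - r₁) / 2)
    (hmeet : (closedBall b s ∩ closure ((closedBall a r₀ \ ball a r₁)ᶜ)).Nonempty) :
    ∃ r₀' r₁' : ℝ, 0 < r₀' ∧ 0 < r₁' ∧
      closedBall a r₀' \ ball a r₁' ⊆ closedBall a r₀ \ ball a r₁ ∧
      (closedBall a r₀' \ ball a r₁') ∩ ball b s = ∅ ∧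
      r₀ - r₁ - 2 * s ≤ r₀' - r₁' := by
  obtain ⟨x, hxb, hx⟩ := hmeet
  rw [mem_closedBall] at hxb
  have hcl : x ∈ closedBall a r₁ ∪ {z : ℂ | r₀ ≤ dist z a} := by
    have hsub : (closedBall a r₀ \ ball a r₁)ᶜ ⊆ closedBall a r₁ ∪ {z : ℂ | r₀ ≤ dist z a} := by
      intro z hz
      rcases not_and_or.mp hz with h | h
      · right
        simp only [mem_closedBall, not_le] at h
        exact le_of_lt h
      · left
        rw [not_not] at h
        exact ball_subset_closedBall h
    have hclosed : IsClosed (closedBall a r₁ ∪ {z : ℂ | r₀ ≤ dist z a}) :=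
      IsClosed.union Metric.isClosed_closedBall
        (isClosed_le continuous_const (continuous_id.dist continuous_const))
    exact hclosed.closure_eq ▸ closure_mono hsub hx
  rcases hcl with h | h
  · -- b is near the inner hole
    rw [mem_closedBall] at h
    refine ⟨r₀, r₁ + 2 * s, lt_trans h₁ h₀₁, by linarith, ?_, ?_, by linarith⟩
    · exact fun z hz => ⟨hz.1, fun hzb => hz.2 (ball_subset_ball (by linarith) hzb)⟩
    · ext z
      simp only [Set.mem_inter_iff, Set.mem_diff, mem_closedBall, mem_ball, Set.mem_empty_iff_false,
        iff_false, not_and, not_lt]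
      rintro ⟨_, hz2⟩
      have t1 := dist_triangle z b a
      have t2 := dist_triangle b x a
      rw [dist_comm b x] at t2
      linarith
  · -- b is near the outside
    simp only [Set.mem_setOf_eq] at h
    refine ⟨r₀ - 2 * s, r₁, by linarith, h₁, ?_, ?_, by linarith⟩
    · exact fun z hz => ⟨closedBall_subset_closedBall (by linarith) hz.1, hz.2⟩
    · ext z
      simp only [Set.mem_inter_iff, Set.mem_diff, mem_closedBall, mem_ball, Set.mem_empty_iff_false,
        iff_false, not_and, not_lt]
      rintro ⟨hz1, _⟩
      have t1 := dist_triangle x b a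
      have t2 := dist_triangle b z a
      rw [dist_comm b z] at t2
      linarith

end
end
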